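/- (Average chord length bound.) Fix d ≥ 2, let r be an arc-length parameterization of a closed curve of length 1 in ℝ^d, and let s ∈ [0, 1/2]. Then ∫_0^1 ‖r(t+s) − r(t)‖ dt ≤ sin(πs)/π. -/

import Mathlib

open MeasureTheory Set Real Function

noncomputable section

/-- `r` is an arc-length parameterization of a closed curve of length 1 in `ℝ^d`. -/
def IsUnitClosedCurve (d : ℕ) (r : ℝ → EuclideanSpace ℝ (Fin d)) : Prop :=
  Continuous r ∧ Periodic r 1 ∧ LipschitzWith 1 r ∧
    eVariationOn r (Icc (0:ℝ) 1) = 1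

/-- The length of a shortest closed curve covering `S`. -/
def w {d : ℕ} (S : Set (EuclideanSpace ℝ (Fin d))) : ENNReal :=
  ⨅ (γ : {γ : ℝ → EuclideanSpace ℝ (Fin d) //
      Continuous γ ∧ Periodic γ 1 ∧ S ⊆ γ '' Icc (0:ℝ) 1}),
    eVariationOn γ.1 (Icc (0:ℝ) 1)

/-- A partition of `[0,1)` into `k` measurable sets of measure `1/k` each. -/
def IsEqualPartition (k : ℕ) (A : Fin k → Set ℝ) : Prop :=
  (∀ i, MeasurableSet (A i)) ∧ Pairwise (onFun Disjoint A) ∧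
    (⋃ i, A i) = Ico (0:ℝ) 1 ∧ ∀ i, volume (A i) = ENNReal.ofReal (1 / k)

def betaCurve (d k : ℕ) (r : ℝ → EuclideanSpace ℝ (Fin d)) : ENNReal :=
  ⨅ (A : {A : Fin k → Set ℝ // IsEqualPartition k A}),
    (k : ENNReal)⁻¹ * ∑ i, w (r '' A.1 i)

def betaSup (d k : ℕ) : ENNReal :=
  ⨆ (r : {r : ℝ → EuclideanSpace ℝ (Fin d) // IsUnitClosedCurve d r}),
    betaCurve d k r.1

/-- A partition of `C` into `k` nonempty sets. -/
def IsPartitionInto {α : Type*} (k : ℕ) (S : Fin k → Set α) (C : Set α) : Prop :=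
  (∀ i, (S i).Nonempty) ∧ Pairwise (onFun Disjoint S) ∧ (⋃ i, S i) = C

def gammaCurve {d : ℕ} (k : ℕ) (C : Set (EuclideanSpace ℝ (Fin d))) : ENNReal :=
  ⨅ (S : {S : Fin k → Set (EuclideanSpace ℝ (Fin d)) // IsPartitionInto k S C}),
    ⨆ i, w (S.1 i)

def gammaSup (d k : ℕ) : ENNReal :=
  ⨆ (r : {r : ℝ → EuclideanSpace ℝ (Fin d) // IsUnitClosedCurve d r}),
    gammaCurve k (r.1 '' Icc (0:ℝ) 1)

def circlePt (t : ℝ) : EuclideanSpace ℝ (Fin 2) :=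
  (EuclideanSpace.equiv (Fin 2) ℝ).symm ![Real.cos t, Real.sin t]

/-!
Expand the coordinates of `r` in Fourier series on the circle `ℝ/ℤ`. By Parseval the mean squared
chord `Q σ = ∫ ‖r (t + σ) - r t‖²` equals `∑ₙ sin²(πnσ) aₙ` for weights `aₙ ≥ 0` independent of
`σ`. The Lipschitz bound `Q σ ≤ σ²`, divided by `σ²` as `σ → 0⁺`, gives `∑ₙ (πn)² aₙ ≤ 1`
(Wirtinger's inequality), and then `sin²(nθ) ≤ n² sin²θ` yields `Q s ≤ sin²(πs)/π²`.
Cauchy–Schwarz bounds the mean chord by `√(Q s)`.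
-/

open Filter Topology
open AddCircle (haarAddCircle)

theorem abs_sin_nat_mul_le (n : ℕ) (θ : ℝ) : |sin (n * θ)| ≤ n * |sin θ| := by
  induction n with
  | zero => simp
  | succ n ih =>
    calc |sin ((n + 1 : ℕ) * θ)| = |sin (n * θ) * cos θ + cos (n * θ) * sin θ| := by
          push_cast; rw [add_mul, one_mul, sin_add]
      _ ≤ |sin (n * θ)| * |cos θ| + |cos (n * θ)| * |sin θ| := by
          simpa only [abs_mul] using abs_add_le (sin (n * θ) * cos θ) (cos (n * θ) * sin θ)
      _ ≤ |sin (n * θ)| * 1 + 1 * |sin θ| := by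
          gcongr
          · exact abs_cos_le_one θ
          · exact abs_cos_le_one _
      _ ≤ (n + 1 : ℕ) * |sin θ| := by push_cast; linarith

theorem sin_int_mul_sq_le (n : ℤ) (θ : ℝ) : sin (n * θ) ^ 2 ≤ n ^ 2 * sin θ ^ 2 := by
  obtain ⟨m, rfl | rfl⟩ := Int.eq_nat_or_neg n <;>
  · have h := pow_le_pow_left₀ (abs_nonneg _) (abs_sin_nat_mul_le m θ) 2
    simpa [neg_mul, sin_neg, mul_pow] using h

theorem sin_eq_mul_sinc (x : ℝ) : sin x = x * sinc x := by
  rcases eq_or_ne x 0 with rfl | hx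
  · simp
  · rw [sinc_of_ne_zero hx, mul_div_cancel₀ _ hx]

section SineSeries

variable {a : ℤ → ℝ} {Q : ℝ → ℝ}

theorem sum_mul_sq_le_one_of_hasSum_sin_sq_le (ha : ∀ n, 0 ≤ a n)
    (hQ : ∀ σ, HasSum (fun n : ℤ => sin (π * n * σ) ^ 2 * a n) (Q σ))
    (hQle : ∀ σ, 0 < σ → Q σ ≤ σ ^ 2) (u : Finset ℤ) :
    ∑ n ∈ u, (π * n) ^ 2 * a n ≤ 1 := by
  -- `F σ` is the partial sum of `Q σ / σ²`, written with `sinc` so that it is continuous at `0`.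
  set F : ℝ → ℝ := fun σ => ∑ n ∈ u, (π * n * sinc (π * n * σ)) ^ 2 * a n
  have hF (σ : ℝ) (hσ : 0 < σ) : F σ ≤ 1 := by
    have h := (sum_le_hasSum u (fun n _ => mul_nonneg (sq_nonneg _) (ha n)) (hQ σ)).trans
      (hQle σ hσ)
    simp only [sin_eq_mul_sinc (π * _ * σ)] at h
    have h' : σ ^ 2 * F σ ≤ σ ^ 2 * 1 := by
      simpa only [F, Finset.mul_sum, mul_pow, mul_one, mul_assoc, mul_left_comm (σ ^ 2)] using h
    exact le_of_mul_le_mul_left h' (by positivity)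
  have hlim : Tendsto F (𝓝[>] 0) (𝓝 (F 0)) :=
    (by fun_prop : Continuous F).continuousAt.tendsto.mono_left nhdsWithin_le_nhds
  simpa [F] using le_of_tendsto hlim (eventually_nhdsWithin_of_forall hF)

theorem le_sin_sq_div_pi_sq_of_hasSum_sin_sq_le (ha : ∀ n, 0 ≤ a n)
    (hQ : ∀ σ, HasSum (fun n : ℤ => sin (π * n * σ) ^ 2 * a n) (Q σ))
    (hQle : ∀ σ, 0 < σ → Q σ ≤ σ ^ 2) (s : ℝ) :
    Q s ≤ sin (π * s) ^ 2 / π ^ 2 := by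
  have hle := sum_mul_sq_le_one_of_hasSum_sin_sq_le ha hQ hQle
  have hsum : Summable fun n : ℤ => (π * n) ^ 2 * a n :=
    summable_of_sum_le (fun n => mul_nonneg (sq_nonneg _) (ha n)) hle
  have hterm (n : ℤ) :
      sin (π * n * s) ^ 2 * a n ≤ sin (π * s) ^ 2 / π ^ 2 * ((π * n) ^ 2 * a n) := by
    have h := sin_int_mul_sq_le n (π * s)
    rw [show (n : ℝ) * (π * s) = π * n * s by ring] at h
    calc sin (π * n * s) ^ 2 * a n ≤ n ^ 2 * sin (π * s) ^ 2 * a n := by gcongr; exact ha n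
      _ = sin (π * s) ^ 2 / π ^ 2 * ((π * n) ^ 2 * a n) := by field_simp
  calc Q s ≤ ∑' n : ℤ, sin (π * s) ^ 2 / π ^ 2 * ((π * n) ^ 2 * a n) :=
        hasSum_le hterm (hQ s) (hsum.mul_left _).hasSum
    _ = sin (π * s) ^ 2 / π ^ 2 * ∑' n : ℤ, (π * n) ^ 2 * a n := tsum_mul_left
    _ ≤ sin (π * s) ^ 2 / π ^ 2 * 1 := by gcongr; exact hsum.tsum_le_of_sum_le hle
    _ = sin (π * s) ^ 2 / π ^ 2 := mul_one _

end SineSeries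

theorem sq_integral_le_integral_sq {Ω : Type*} [MeasurableSpace Ω] {μ : Measure Ω}
    [IsProbabilityMeasure μ] {X : Ω → ℝ} (hX : MemLp X 2 μ) :
    (∫ ω, X ω ∂μ) ^ 2 ≤ ∫ ω, X ω ^ 2 ∂μ := by
  have h := ProbabilityTheory.variance_nonneg X μ
  rw [ProbabilityTheory.variance_eq_sub hX] at h
  simpa using h

section Circle

variable {T : ℝ}

theorem fourier_add_apply (n : ℤ) (x y : AddCircle T) :
    fourier n (x + y) = fourier n x * fourier n y := by
  simp only [fourier_apply, smul_add, AddCircle.toCircle_add, Circle.coe_mul]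

theorem norm_fourier_coe_sub_one_sq (n : ℤ) (x : ℝ) :
    ‖fourier n (x : AddCircle T) - 1‖ ^ 2 = 4 * sin (π * n * x / T) ^ 2 := by
  have harg : 2 * π * Complex.I * n * x / T = Complex.I * ((2 * (π * n * x / T) : ℝ) : ℂ) := by
    push_cast; ring
  rw [fourier_coe_apply, harg, Complex.norm_exp_I_mul_ofReal_sub_one,
    mul_div_cancel_left₀ _ two_ne_zero, norm_mul, mul_pow, Real.norm_eq_abs, Real.norm_eq_abs,
    sq_abs]
  norm_num

variable [Fact (0 < T)]

theorem fourierCoeff_comp_add_right {E : Type*} [NormedAddCommGroup E] [NormedSpace ℂ E]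
    (f : AddCircle T → E) (y : AddCircle T) (n : ℤ) :
    fourierCoeff (fun x => f (x + y)) n = fourier n y • fourierCoeff f n := by
  have hshift := integral_add_right_eq_self (μ := haarAddCircle)
    (fun x => fourier (-n) (x - y) • f x) y
  simp only [add_sub_cancel_right] at hshift
  rw [fourierCoeff, fourierCoeff, hshift, ← integral_smul]
  congr 1 with x
  rw [sub_eq_add_neg, fourier_add_apply, mul_comm, mul_smul,
    fourier_apply (x := -y), neg_smul_neg, ← fourier_apply]

theorem hasSum_sq_fourierCoeff_of_continuous (f : C(AddCircle T, ℂ)) :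
    HasSum (fun n => ‖fourierCoeff f n‖ ^ 2) (∫ x, ‖f x‖ ^ 2 ∂haarAddCircle) := by
  have h := hasSum_sq_fourierCoeff (ContinuousMap.toLp (E := ℂ) 2 haarAddCircle ℂ f)
  simp only [fourierCoeff_toLp] at h
  convert h using 1
  refine integral_congr_ae ?_
  filter_upwards [ContinuousMap.coeFn_toLp (p := 2) (𝕜 := ℂ) haarAddCircle f] with x hx
  rw [hx]

theorem hasSum_sin_sq_mul_norm_fourierCoeff_sq (f : C(AddCircle T, ℂ)) (x : ℝ) :
    HasSum (fun n : ℤ => sin (π * n * x / T) ^ 2 * (4 * ‖fourierCoeff f n‖ ^ 2))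
      (∫ y, ‖f (y + (x : AddCircle T)) - f y‖ ^ 2 ∂haarAddCircle) := by
  have hint (g : C(AddCircle T, ℂ)) : Integrable g haarAddCircle :=
    g.continuous.integrable_of_hasCompactSupport (.of_compactSpace _)
  let g : C(AddCircle T, ℂ) := f.comp (ContinuousMap.addRight (x : AddCircle T)) - f
  have hg : ⇑g = (fun y => f (y + (x : AddCircle T))) + (-1 : ℂ) • ⇑f := by
    ext y; simp [g, sub_eq_add_neg]
  have hcoeff (n : ℤ) :
      fourierCoeff g n = (fourier n (x : AddCircle T) - 1) * fourierCoeff f n := by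
    rw [hg, fourierCoeff.add (f := fun y => f (y + (x : AddCircle T)))
      (hint (f.comp (ContinuousMap.addRight _))) ((hint f).smul _),
      Pi.add_apply, fourierCoeff.const_smul, fourierCoeff_comp_add_right, smul_eq_mul,
      smul_eq_mul]
    ring
  convert hasSum_sq_fourierCoeff_of_continuous g using 2 with n
  · rw [hcoeff, norm_mul, mul_pow, norm_fourier_coe_sub_one_sq]
    ring
  · rfl

variable {ι : Type*} [Fintype ι]

/-- The Fourier coefficients of a real curve are taken coordinatewise, after complexification. -/
def powerSpectrum (R : AddCircle T → EuclideanSpace ℝ ι) (n : ℤ) : ℝ :=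
  ∑ i, ‖fourierCoeff (fun y => (R y i : ℂ)) n‖ ^ 2

theorem hasSum_sin_sq_mul_powerSpectrum (R : C(AddCircle T, EuclideanSpace ℝ ι)) (x : ℝ) :
    HasSum (fun n : ℤ => sin (π * n * x / T) ^ 2 * (4 * powerSpectrum R n))
      (∫ y, ‖R (y + (x : AddCircle T)) - R y‖ ^ 2 ∂haarAddCircle) := by
  let coord (i : ι) : C(AddCircle T, ℂ) := ⟨fun y => (R y i : ℂ), by fun_prop⟩
  have hnorm (y : AddCircle T) : ‖R (y + (x : AddCircle T)) - R y‖ ^ 2 =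
      ∑ i, ‖coord i (y + (x : AddCircle T)) - coord i y‖ ^ 2 := by
    simp [coord, EuclideanSpace.norm_sq_eq, ← Complex.ofReal_sub]
  simp only [hnorm, powerSpectrum, Finset.mul_sum]
  rw [integral_finsetSum _ fun i _ => ?_]
  · exact hasSum_sum fun i _ => hasSum_sin_sq_mul_norm_fourierCoeff_sq (coord i) x
  · exact (by fun_prop : Continuous fun y => ‖coord i (y + (x : AddCircle T)) - coord i y‖ ^ 2)
      |>.integrable_of_hasCompactSupport (.of_compactSpace _)

theorem integral_norm_add_sub_sq_le_of_lipschitzWith {E : Type*} [NormedAddCommGroup E]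
    {R : AddCircle T → E} (hR : LipschitzWith 1 fun t : ℝ => R t) (σ : ℝ) :
    ∫ y, ‖R (y + (σ : AddCircle T)) - R y‖ ^ 2 ∂haarAddCircle ≤ σ ^ 2 := by
  have hpt (y : AddCircle T) : ‖R (y + (σ : AddCircle T)) - R y‖ ^ 2 ≤ σ ^ 2 := by
    induction y using QuotientAddGroup.induction_on with
    | H t =>
      have h := hR.dist_le_mul (t + σ) t
      rw [dist_eq_norm, dist_eq_norm, NNReal.coe_one, one_mul, add_sub_cancel_left,
        Real.norm_eq_abs, AddCircle.coe_add] at h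
      simpa only [sq_abs] using pow_le_pow_left₀ (norm_nonneg _) h 2
  calc ∫ y, ‖R (y + (σ : AddCircle T)) - R y‖ ^ 2 ∂haarAddCircle
      ≤ ∫ _, σ ^ 2 ∂haarAddCircle :=
        integral_mono_of_nonneg (.of_forall fun _ => by positivity) (integrable_const _)
          (.of_forall hpt)
    _ = σ ^ 2 := by simp

end Circle

theorem intervalIntegral_zero_one_eq_integral_haarAddCircle {E : Type*} [NormedAddCommGroup E]
    [NormedSpace ℝ E] (f : UnitAddCircle → E) :
    ∫ t in (0 : ℝ)..1, f t = ∫ y, f y ∂haarAddCircle := by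
  simpa [AddCircle.volume_eq_smul_haarAddCircle] using UnitAddCircle.intervalIntegral_preimage 0 f

theorem average_chord_length_general (d : ℕ)
    (r : ℝ → EuclideanSpace ℝ (Fin d)) (hr : IsUnitClosedCurve d r)
    (s : ℝ) (hs : s ∈ Icc (0:ℝ) (1 / 2)) :
    ∫ t in (0:ℝ)..1, ‖r (t + s) - r t‖ ≤ Real.sin (π * s) / π := by
  obtain ⟨hc, hp, hlip, -⟩ := hr
  let R : C(UnitAddCircle, EuclideanSpace ℝ (Fin d)) := ⟨hp.lift, continuous_coinduced_dom.mpr hc⟩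
  set Q : ℝ → ℝ := fun σ => ∫ y, ‖R (y + (σ : UnitAddCircle)) - R y‖ ^ 2 ∂haarAddCircle
  have hQ (σ : ℝ) : HasSum (fun n : ℤ => sin (π * n * σ) ^ 2 * (4 * powerSpectrum R n)) (Q σ) := by
    simpa only [div_one] using hasSum_sin_sq_mul_powerSpectrum R σ
  have hQs : Q s ≤ (sin (π * s) / π) ^ 2 := by
    rw [div_pow]
    exact le_sin_sq_div_pi_sq_of_hasSum_sin_sq_le (fun n => by unfold powerSpectrum; positivity)
      hQ (fun σ _ => integral_norm_add_sub_sq_le_of_lipschitzWith hlip σ) s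
  have hsin : 0 ≤ sin (π * s) / π := by
    refine div_nonneg (sin_nonneg_of_nonneg_of_le_pi (by nlinarith [pi_pos, hs.1]) ?_) pi_pos.le
    nlinarith [pi_pos, hs.2]
  let chord : C(UnitAddCircle, ℝ) := ⟨fun y => ‖R (y + (s : UnitAddCircle)) - R y‖, by fun_prop⟩
  have hchord : ∫ t in (0:ℝ)..1, ‖r (t + s) - r t‖ = ∫ y, chord y ∂haarAddCircle :=
    intervalIntegral_zero_one_eq_integral_haarAddCircle chord
  rw [hchord]
  exact (abs_le_of_sq_le_sq' ((sq_integral_le_integral_sq (chord.memLp _ ℝ)).trans hQs) hsin).2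

theorem average_chord_length (d : ℕ) (hd : 2 ≤ d)
    (r : ℝ → EuclideanSpace ℝ (Fin d)) (hr : IsUnitClosedCurve d r)
    (s : ℝ) (hs : s ∈ Icc (0:ℝ) (1 / 2)) :
    ∫ t in (0:ℝ)..1, ‖r (t + s) - r t‖ ≤ Real.sin (π * s) / π :=
  average_chord_length_general d r hr s hs
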